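/- Let G be a graph of conductance Φ_G and let T* be an optimal HC tree of G whose dense branch consists only of the root of T*. Then for every HC tree T of G, cost_G(T) ≤ cost_G(T*)/Φ_G. -/

import Mathlib

/-!
Both children of the root of `T*` have volume at most `vol(G)/2` and partition `V`, so each has
volume exactly `vol(G)/2`. The root alone therefore contributes
`n · w(A₁, B₁) ≥ n · Φ · vol(G)/2` to `cost(T*)`, whereas every HC tree costs at most
`n · vol(G)/2`: each edge is charged at most `n`, once, at the node separating its endpoints.
-/

open Finset

/-- A hierarchical clustering (HC) tree: a binary tree with vertex-labelled leaves. -/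
inductive HCTree (V : Type) where
  | leaf (v : V) : HCTree V
  | node (l r : HCTree V) : HCTree V

namespace HCTree

variable {V : Type} [Fintype V] [DecidableEq V]

/-- The list of leaf labels of an HC tree. -/
def leafList : HCTree V → List V
  | leaf v => [v]
  | node l r => leafList l ++ leafList r

/-- The set of leaves of an HC tree. -/
def leaves (t : HCTree V) : Finset V := t.leafList.toFinset

/-- Total weight of (ordered) pairs between two vertex sets:
`w(S,T) = ∑_{u ∈ S, v ∈ T} w(u,v)`. -/
def cut (w : V → V → ℝ) (S T : Finset V) : ℝ := ∑ u ∈ S, ∑ v ∈ T, w u v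

/-- The (weighted) degree of a vertex: `d_u = ∑_v w(u,v)`. -/
def deg (w : V → V → ℝ) (u : V) : ℝ := ∑ v, w u v

/-- The volume of a vertex set: `vol(S) = ∑_{u ∈ S} d_u`. -/
def vol (w : V → V → ℝ) (S : Finset V) : ℝ := ∑ u ∈ S, deg w u

/-- Dasgupta's cost of an HC tree, via the equivalent internal-node formula:
`cost(T) = ∑_{N → (N₁,N₂)} |leaves(T[N])| · w(leaves(N₁), leaves(N₂))`. -/
def cost (w : V → V → ℝ) : HCTree V → ℝ
  | leaf _ => 0
  | node l r =>
      ((leaves (node l r)).card : ℝ) * cut w (leaves l) (leaves r)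
        + cost w l + cost w r

/-- `t` is an HC tree of the graph on vertex set `V`: its leaves are distinct
and are exactly the vertices of `V`. -/
def isHC (t : HCTree V) : Prop := t.leafList.Nodup ∧ t.leaves = Finset.univ

end HCTree

namespace HCTree

variable {V : Type} [Fintype V] [DecidableEq V]

/-- `DenseBranch w t k A B` says that `(A 0, …, A k)` is the dense branch of the HC tree `t`,
with `B (i+1)` the sibling of `A (i+1)`: `A 0` is the root, each `A (i+1)` is the child of
`A i` of higher volume, every node on the branch has volume greater than `vol(G)/2`,
and both children of the final node `A k` have volume at most `vol(G)/2`. -/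
def DenseBranch (w : V → V → ℝ) (t : HCTree V) (k : ℕ)
    (A B : ℕ → HCTree V) : Prop :=
  A 0 = t ∧
  (∀ i < k,
      (A i = HCTree.node (A (i+1)) (B (i+1)) ∨ A i = HCTree.node (B (i+1)) (A (i+1))) ∧
      vol w (leaves (B (i+1))) ≤ vol w (leaves (A (i+1)))) ∧
  (∀ i ≤ k, vol w (Finset.univ : Finset V) / 2 < vol w (leaves (A i))) ∧
  (∃ l r, A k = HCTree.node l r ∧
      vol w (leaves l) ≤ vol w (Finset.univ : Finset V) / 2 ∧
      vol w (leaves r) ≤ vol w (Finset.univ : Finset V) / 2)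

end HCTree


namespace HCTree

variable {V : Type}

lemma cut_nonneg (w : V → V → ℝ) (hw : ∀ u v, 0 ≤ w u v) (S T : Finset V) :
    0 ≤ cut w S T :=
  sum_nonneg fun _ _ => sum_nonneg fun _ _ => hw _ _

lemma cut_comm (w : V → V → ℝ) (hsymm : ∀ u v, w u v = w v u) (S T : Finset V) :
    cut w S T = cut w T S := by
  unfold cut
  rw [sum_comm]
  exact sum_congr rfl fun u _ => sum_congr rfl fun v _ => hsymm v u

variable [DecidableEq V]

lemma cut_union_left (w : V → V → ℝ) {S T : Finset V} (h : Disjoint S T) (U : Finset V) :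
    cut w (S ∪ T) U = cut w S U + cut w T U :=
  sum_union h

lemma cut_union_right (w : V → V → ℝ) {S T : Finset V} (h : Disjoint S T) (U : Finset V) :
    cut w U (S ∪ T) = cut w U S + cut w U T := by
  unfold cut
  rw [← sum_add_distrib]
  exact sum_congr rfl fun _ _ => sum_union h

lemma leaves_node (l r : HCTree V) : leaves (node l r) = leaves l ∪ leaves r := by
  simp [leaves, leafList]

lemma leaves_nonempty : ∀ t : HCTree V, (leaves t).Nonempty
  | leaf v => ⟨v, by simp [leaves, leafList]⟩
  | node l r => by
    rw [leaves_node]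
    exact (leaves_nonempty l).mono subset_union_left

lemma disjoint_leaves_of_nodup {l r : HCTree V} (h : (node l r).leafList.Nodup) :
    Disjoint (leaves l) (leaves r) := by
  rw [leaves, leaves, List.disjoint_toFinset_iff_disjoint]
  exact (List.nodup_append'.mp h).2.2

lemma cost_nonneg (w : V → V → ℝ) (hw : ∀ u v, 0 ≤ w u v) : ∀ t : HCTree V, 0 ≤ cost w t
  | leaf _ => le_rfl
  | node l r => by
    have := cut_nonneg w hw (leaves l) (leaves r)
    have := cost_nonneg w hw l
    have := cost_nonneg w hw r
    unfold cost
    positivity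

lemma card_mul_cut_le_cost_node (w : V → V → ℝ) (hw : ∀ u v, 0 ≤ w u v) (l r : HCTree V) :
    #(leaves (node l r)) * cut w (leaves l) (leaves r) ≤ cost w (node l r) := by
  have := cost_nonneg w hw l
  have := cost_nonneg w hw r
  rw [cost]
  linarith

/-- By symmetry of `w`, the root term `n · w(L, R)` is half of `n · (w(L, R) + w(R, L))`, and the
subtrees contribute `w(L, L)` and `w(R, R)` with factors at most `n`. -/
lemma two_mul_cost_le_card_mul_cut (w : V → V → ℝ) (hw : ∀ u v, 0 ≤ w u v)
    (hsymm : ∀ u v, w u v = w v u) :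
    ∀ t : HCTree V, t.leafList.Nodup →
      2 * cost w t ≤ #(leaves t) * cut w (leaves t) (leaves t)
  | leaf _, _ => by simp [cost, leaves, leafList, cut, hw]
  | node l r, h => by
    have ihl := two_mul_cost_le_card_mul_cut w hw hsymm l (List.nodup_append.mp h).1
    have ihr := two_mul_cost_le_card_mul_cut w hw hsymm r (List.nodup_append.mp h).2.1
    have hd := disjoint_leaves_of_nodup h
    have hl : (#(leaves l) : ℝ) ≤ #(leaves l ∪ leaves r) := by
      exact_mod_cast card_le_card subset_union_left
    have hr : (#(leaves r) : ℝ) ≤ #(leaves l ∪ leaves r) := by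
      exact_mod_cast card_le_card subset_union_right
    have hll := mul_le_mul_of_nonneg_right hl (cut_nonneg w hw (leaves l) (leaves l))
    have hrr := mul_le_mul_of_nonneg_right hr (cut_nonneg w hw (leaves r) (leaves r))
    have hlr := cut_comm w hsymm (leaves l) (leaves r)
    rw [cost, leaves_node, cut_union_left w hd, cut_union_right w hd, cut_union_right w hd]
    nlinarith

variable [Fintype V]

lemma vol_add_vol_compl (w : V → V → ℝ) (S : Finset V) : vol w S + vol w Sᶜ = vol w univ :=
  sum_add_sum_compl S _

lemma leaves_right_eq_compl_of_isHC {l r : HCTree V} (h : isHC (node l r)) :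
    leaves r = (leaves l)ᶜ := by
  have hcover := h.2
  rw [leaves_node] at hcover
  rw [compl_eq_univ_sdiff, ← hcover, union_sdiff_cancel_left (disjoint_leaves_of_nodup h.1)]

lemma cost_le_card_mul_vol_div_two (w : V → V → ℝ) (hw : ∀ u v, 0 ≤ w u v)
    (hsymm : ∀ u v, w u v = w v u) {t : HCTree V} (ht : isHC t) :
    cost w t ≤ Fintype.card V * vol w univ / 2 := by
  have h := two_mul_cost_le_card_mul_cut w hw hsymm t ht.1
  have hvol : cut w univ univ = vol w univ := rfl
  rw [ht.2, card_univ, hvol] at h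
  linarith

end HCTree

open HCTree in
theorem cost_le_opt_div_phi_short_branch_general {V : Type} [Fintype V] [DecidableEq V]
    (w : V → V → ℝ) (hw : ∀ u v, 0 ≤ w u v) (hsymm : ∀ u v, w u v = w v u)
    (Φ : ℝ) (hΦ0 : 0 < Φ)
    (hΦ : ∀ S : Finset V, S.Nonempty → vol w S ≤ vol w (Finset.univ : Finset V) / 2 →
      Φ * vol w S ≤ cut w S Sᶜ)
    (Tstar : HCTree V) (hTstar : isHC Tstar)
    (A B : ℕ → HCTree V) (hdb : DenseBranch w Tstar 0 A B)
    (T : HCTree V) (hT : isHC T) :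
    cost w T ≤ cost w Tstar / Φ := by
  obtain ⟨hA0, -, -, l, r, hroot, hl, hr⟩ := hdb
  rw [hA0] at hroot
  subst hroot
  have hcompl := leaves_right_eq_compl_of_isHC hTstar
  have hhalf : vol w (leaves l) = vol w univ / 2 := by
    have := vol_add_vol_compl w (leaves l)
    rw [← hcompl] at this
    linarith
  have hcond := hΦ (leaves l) (leaves_nonempty l) hhalf.le
  rw [← hcompl] at hcond
  have hcard : (#(leaves (node l r)) : ℝ) = Fintype.card V := by rw [hTstar.2, card_univ]
  rw [le_div_iff₀ hΦ0]
  calc cost w T * Φ ≤ Fintype.card V * vol w univ / 2 * Φ := by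
        gcongr; exact cost_le_card_mul_vol_div_two w hw hsymm hT
    _ = Fintype.card V * (Φ * vol w (leaves l)) := by rw [hhalf]; ring
    _ ≤ Fintype.card V * cut w (leaves l) (leaves r) := by gcongr
    _ ≤ cost w (node l r) := hcard ▸ card_mul_cut_le_cost_node w hw l r

open HCTree in
/-- Let `G` have conductance `Φ_G` and let `T*` be an optimal HC tree of `G`
whose dense branch consists only of the root (i.e. both children of the root have volume at
most `vol(G)/2`). Then every HC tree `T` of `G` satisfies `cost_G(T) ≤ cost_G(T*)/Φ_G`. -/
theorem cost_le_opt_div_phi_short_branch {V : Type} [Fintype V] [DecidableEq V]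
    (w : V → V → ℝ) (hw : ∀ u v, 0 ≤ w u v) (hsymm : ∀ u v, w u v = w v u)
    (Φ : ℝ) (hΦ0 : 0 < Φ)
    (hΦ : ∀ S : Finset V, S.Nonempty → vol w S ≤ vol w (Finset.univ : Finset V) / 2 →
      Φ * vol w S ≤ cut w S Sᶜ)
    (Tstar : HCTree V) (hTstar : isHC Tstar)
    (hopt : ∀ t : HCTree V, isHC t → cost w Tstar ≤ cost w t)
    (A B : ℕ → HCTree V) (hdb : DenseBranch w Tstar 0 A B)
    (T : HCTree V) (hT : isHC T) :
    cost w T ≤ cost w Tstar / Φ :=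
  cost_le_opt_div_phi_short_branch_general w hw hsymm Φ hΦ0 hΦ Tstar hTstar A B hdb T hT
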